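/- arXiv:2007.14539 — 3 statements merged into one kernel-verified Lean document; each statement's English description precedes it below -/
import Mathlib

section
/- Let V ⊆ [n] and suppose m ≥ |V|. There is a constant T = T(α) such that Pr[s_max(A_V) > T·√m] ≤ e^{−cm} for an absolute constant c > 0, where s_max(A_V) is the largest singular value of the m × |V| submatrix A_V. -/
open MeasureTheory ProbabilityTheory Real Filter Topology

noncomputable section

/-- Euclidean dot product on `Fin n → ℝ`. -/
def dot {n : ℕ} (a b : Fin n → ℝ) : ℝ := ∑ i, a i * b i

/-- Euclidean (ℓ²) norm on `Fin n → ℝ`. -/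
def norm2 {n : ℕ} (v : Fin n → ℝ) : ℝ := Real.sqrt (∑ i, (v i) ^ 2)

/-- ℓ¹ norm on `Fin n → ℝ`. -/
def norm1 {n : ℕ} (v : Fin n → ℝ) : ℝ := ∑ i, |v i|

/-- Support of a vector, as a finset. -/
def spt {n : ℕ} (v : Fin n → ℝ) : Finset (Fin n) := Finset.univ.filter fun i => v i ≠ 0

/-- Standard Gaussian measure `N(0, I_n)` on `Fin n → ℝ`. -/
def stdGaussianPi (n : ℕ) : Measure (Fin n → ℝ) := Measure.pi fun _ => gaussianReal 0 1

/-- Survival probability `γ_S(t) = Pr[Z + t ∈ S]`, `Z ~ N(0,1)`. -/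
def gammaS (S : Set ℝ) (t : ℝ) : ℝ := (gaussianReal t 1 S).toReal

/-- Truncated normal `N(t, 1; S)`. -/
def truncNormal (S : Set ℝ) (t : ℝ) : Measure ℝ := (gaussianReal t 1)[|S]

/-- `μ_t`, the mean of `N(t,1;S)`. -/
def truncMean (S : Set ℝ) (t : ℝ) : ℝ := ∫ z, z ∂(truncNormal S t)

/-- `Var(Z_t)`, the variance of `N(t,1;S)`. -/
def truncVar (S : Set ℝ) (t : ℝ) : ℝ := variance id (truncNormal S t)

/-- Constant survival probability assumption: `E_{a ~ N(0,I_n)}[γ_S(aᵀ x*)] ≥ α`. -/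
def CSP (n : ℕ) (xstar : Fin n → ℝ) (S : Set ℝ) (α : ℝ) : Prop :=
  α ≤ ∫ a, gammaS S (dot a xstar) ∂(stdGaussianPi n)

/-- `m` i.i.d. untruncated samples `(a_j, η_j)`, `a_j ~ N(0,I_n)`, `η_j ~ N(0,1)`. -/
def rawMeasure (m n : ℕ) : Measure (Fin m → (Fin n → ℝ) × ℝ) :=
  Measure.pi fun _ => (stdGaussianPi n).prod (gaussianReal 0 1)

/-- The law of `m` truncated samples: condition the `m` i.i.d. pairs `(a_j, η_j)` on all
responses `a_jᵀ x* + η_j` lying in `S`.  (Equivalently, each sample is i.i.d. from the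
law of `(a, aᵀx* + η)` conditioned on `aᵀx* + η ∈ S`.) -/
def dataMeasure (m n : ℕ) (xstar : Fin n → ℝ) (S : Set ℝ) :
    Measure (Fin m → (Fin n → ℝ) × ℝ) :=
  (rawMeasure m n)[|{ω | ∀ j, dot (ω j).1 xstar + (ω j).2 ∈ S}]

/-- The design matrix `A` (rows `A_j`) of a data set. -/
def mat {m n : ℕ} (ω : Fin m → (Fin n → ℝ) × ℝ) : Fin m → Fin n → ℝ := fun j => (ω j).1

/-- The response vector `y`, `y_j = A_jᵀ x* + η_j`. -/
def yvec {m n : ℕ} (xstar : Fin n → ℝ) (ω : Fin m → (Fin n → ℝ) × ℝ) : Fin m → ℝ :=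
  fun j => dot (ω j).1 xstar + (ω j).2

/-- Truncated negative log-likelihood. -/
def nll (S : Set ℝ) {m n : ℕ} (A : Fin m → Fin n → ℝ) (y : Fin m → ℝ) (x : Fin n → ℝ) : ℝ :=
  (1 / (m : ℝ)) * ∑ j, ((dot (A j) x - y j) ^ 2 / 2
    + Real.log (∫ z in S, Real.exp (-(dot (A j) x - z) ^ 2 / 2)))

open Metric
open scoped ENNReal NNReal

/-!
Conditioning on all responses landing in `S` inflates probabilities by at most `α⁻ᵐ`, because a
single sample survives with probability `E[γ_S(aᵀx*)] ≥ α`. It therefore suffices to bound the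
untruncated Gaussian design. A `1/2`-net `N` of the unit ball of `ℝ^V` with `|N| ≤ 5^|V|` reduces
`‖A_V‖ > t` to `‖A_V u‖ > t/2` for some `u ∈ N`. For a fixed unit vector `u`, `‖A_V u‖²` is a sum
of `m` independent squares `g²` with `g ~ N(0, ‖u‖²)`, and `E exp(g²/4) ≤ √2` gives the Chernoff
bound `e^{-t²/16} 2^{m/2}`. With `T² = 16 (log (5√2/α) + 1)` the factors `α⁻ᵐ`, `5^m`, `2^{m/2}`
and `e^{-T²m/16}` combine to at most `e^{-m}`.
-/

section Net

variable {E : Type*} [NormedAddCommGroup E] [NormedSpace ℝ E]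

lemma card_le_of_isSeparated_closedBall [FiniteDimensional ℝ E]
    (N : Finset E) (hN : ↑N ⊆ closedBall (0 : E) 1) (hsep : IsSeparated (2⁻¹ : ℝ≥0) (N : Set E)) :
    N.card ≤ 5 ^ Module.finrank ℝ E := by
  borelize E
  set μ : Measure E := Measure.addHaar
  set d := Module.finrank ℝ E
  have hdisj : (N : Set E).PairwiseDisjoint fun x => closedBall x 4⁻¹ := by
    intro x hx y hy hxy
    refine closedBall_disjoint_closedBall ?_
    have : ((2⁻¹ : ℝ≥0) : ℝ≥0∞) < edist x y := hsep hx hy hxy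
    rw [edist_dist, ← ENNReal.ofReal_coe_nnreal,
      ENNReal.ofReal_lt_ofReal_iff_of_nonneg (by positivity)] at this
    push_cast at this
    linarith
  have hsub : (⋃ x ∈ N, closedBall x 4⁻¹) ⊆ closedBall (0 : E) (5 / 4) := by
    refine Set.iUnion₂_subset fun x hx => closedBall_subset_closedBall' ?_
    have := mem_closedBall.1 (hN hx)
    linarith
  have hvol : (N.card : ℝ≥0∞) * (ENNReal.ofReal (4⁻¹ ^ d) * μ (ball 0 1))
      ≤ ENNReal.ofReal ((5 / 4) ^ d) * μ (ball 0 1) := by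
    calc (N.card : ℝ≥0∞) * (ENNReal.ofReal (4⁻¹ ^ d) * μ (ball 0 1))
        = ∑ x ∈ N, μ (closedBall x 4⁻¹) := by
          simp [Measure.addHaar_closedBall μ _ (by norm_num : (0 : ℝ) ≤ 4⁻¹), d]
      _ = μ (⋃ x ∈ N, closedBall x 4⁻¹) :=
          (measure_biUnion_finset hdisj fun _ _ => measurableSet_closedBall).symm
      _ ≤ μ (closedBall 0 (5 / 4)) := measure_mono hsub
      _ = ENNReal.ofReal ((5 / 4) ^ d) * μ (ball 0 1) :=
          Measure.addHaar_closedBall μ _ (by norm_num)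
  rw [← mul_assoc, ENNReal.mul_le_mul_iff_left (measure_ball_pos μ 0 one_pos).ne'
    measure_ball_lt_top.ne, ← ENNReal.ofReal_natCast, ← ENNReal.ofReal_mul (by positivity),
    ENNReal.ofReal_le_ofReal_iff (by positivity)] at hvol
  have : (N.card : ℝ) * 4⁻¹ ^ d ≤ 5 ^ d * 4⁻¹ ^ d :=
    hvol.trans_eq (by rw [← mul_pow]; norm_num)
  exact_mod_cast le_of_mul_le_mul_right this (by positivity)

lemma packingNumber_closedBall_le [FiniteDimensional ℝ E] :
    packingNumber 2⁻¹ (closedBall (0 : E) 1) ≤ (5 ^ Module.finrank ℝ E : ℕ) := by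
  refine iSup₂_le fun C hC => iSup_le fun hsep => ?_
  by_contra! hlt
  obtain ⟨t, htC, ht⟩ := Set.exists_subset_encard_eq (Order.add_one_le_of_lt hlt)
  have hfin : t.Finite := Set.finite_of_encard_eq_coe ht
  have hcard := card_le_of_isSeparated_closedBall hfin.toFinset
    (by simpa using htC.trans hC) (by simpa using hsep.subset htC)
  rw [hfin.encard_eq_coe_toFinset_card] at ht
  norm_cast at ht
  omega

lemma exists_finset_isCover_closedBall [FiniteDimensional ℝ E] :
    ∃ N : Finset E, ↑N ⊆ closedBall (0 : E) 1 ∧ N.card ≤ 5 ^ Module.finrank ℝ E ∧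
      IsCover 2⁻¹ (closedBall (0 : E) 1) ↑N := by
  have hpack := packingNumber_closedBall_le (E := E)
  have htop : packingNumber 2⁻¹ (closedBall (0 : E) 1) ≠ ⊤ :=
    ne_top_of_le_ne_top (by simp) hpack
  have hcard := (encard_maximalSeparatedSet htop).trans_le hpack
  have hfin : (maximalSeparatedSet 2⁻¹ (closedBall (0 : E) 1)).Finite :=
    Set.finite_of_encard_le_coe hcard
  refine ⟨hfin.toFinset, by simpa using maximalSeparatedSet_subset, ?_,
    by simpa using isCover_maximalSeparatedSet htop⟩
  rw [hfin.encard_eq_coe_toFinset_card] at hcard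
  exact_mod_cast hcard

lemma ContinuousLinearMap.opNorm_le_two_mul_of_isCover {F : Type*} [NormedAddCommGroup F]
    [NormedSpace ℝ F] (L : E →L[ℝ] F) {N : Set E} (hN : IsCover 2⁻¹ (closedBall 0 1) N)
    {s : ℝ} (hs : 0 ≤ s) (hL : ∀ u ∈ N, ‖L u‖ ≤ s) : ‖L‖ ≤ 2 * s := by
  suffices ‖L‖ ≤ s + ‖L‖ / 2 by linarith
  refine L.opNorm_le_of_unit_norm (by positivity) fun w hw => ?_
  obtain ⟨u, hu, hwu⟩ := Set.mem_iUnion₂.1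
    (isCover_iff_subset_iUnion_closedBall.1 hN (mem_closedBall_zero_iff.2 hw.le))
  rw [mem_closedBall, dist_eq_norm, NNReal.coe_inv, NNReal.coe_ofNat] at hwu
  calc ‖L w‖ = ‖L u + L (w - u)‖ := by rw [← map_add, add_sub_cancel]
    _ ≤ ‖L u‖ + ‖L‖ * ‖w - u‖ := norm_add_le_of_le le_rfl (L.le_opNorm _)
    _ ≤ s + ‖L‖ * 2⁻¹ := by gcongr; exact hL u hu
    _ = s + ‖L‖ / 2 := by ring

end Net

@[fun_prop]
lemma measurable_dot_const {n : ℕ} (w : Fin n → ℝ) :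
    Measurable fun a : Fin n → ℝ => dot a w := by
  unfold dot; fun_prop

instance (n : ℕ) : IsProbabilityMeasure (stdGaussianPi n) := by
  unfold stdGaussianPi; infer_instance

instance (m n : ℕ) : IsProbabilityMeasure (rawMeasure m n) := by
  unfold rawMeasure; infer_instance

lemma lintegral_pi_prod_eq_prod {ι Ω : Type*} [Fintype ι] [MeasurableSpace Ω]
    (μ : ι → Measure Ω) [∀ i, IsProbabilityMeasure (μ i)] {g : ι → Ω → ℝ≥0∞}
    (hg : ∀ i, Measurable (g i)) :
    ∫⁻ ω, ∏ i, g i (ω i) ∂Measure.pi μ = ∏ i, ∫⁻ x, g i x ∂μ i := by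
  rw [lintegral_prod_eq_prod_lintegral_of_indepFun _ _
    (iIndepFun_pi fun i => (hg i).aemeasurable) fun i => (hg i).comp (measurable_pi_apply i)]
  exact Finset.prod_congr rfl fun i _ => (measurePreserving_eval μ i).lintegral_comp (hg i)

lemma lintegral_exp_mul_gaussianReal (μ : ℝ) (v : ℝ≥0) (t : ℝ) :
    ∫⁻ x, ENNReal.ofReal (exp (t * x)) ∂gaussianReal μ v
      = ENNReal.ofReal (exp (μ * t + v * t ^ 2 / 2)) := by
  rw [← ofReal_integral_eq_lintegral_ofReal (integrable_exp_mul_gaussianReal t)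
    (ae_of_all _ fun x => (exp_pos _).le), ← congrFun mgf_id_gaussianReal t]
  rfl

lemma gaussianPDFReal_mul_exp_sq_div_four (x : ℝ) :
    gaussianPDFReal 0 1 x * exp (x ^ 2 / 4) = √2 * gaussianPDFReal 0 2 x := by
  have h2π : √(2 * π * 2) = √2 * √(2 * π) := by
    rw [mul_comm, Real.sqrt_mul zero_le_two]
  simp only [gaussianPDFReal, NNReal.coe_one, NNReal.coe_ofNat, sub_zero, mul_one, h2π]
  rw [mul_assoc, ← exp_add, show -x ^ 2 / 2 + x ^ 2 / 4 = -x ^ 2 / (2 * 2) by ring]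
  field_simp

lemma lintegral_exp_sq_div_four_gaussianReal :
    ∫⁻ x, ENNReal.ofReal (exp (x ^ 2 / 4)) ∂gaussianReal 0 1 = ENNReal.ofReal √2 := by
  rw [gaussianReal_of_var_ne_zero 0 one_ne_zero,
    lintegral_withDensity_eq_lintegral_mul _ (measurable_gaussianPDF 0 1) (by fun_prop)]
  calc ∫⁻ x, gaussianPDF 0 1 x * ENNReal.ofReal (exp (x ^ 2 / 4))
      = ∫⁻ x, ENNReal.ofReal √2 * gaussianPDF 0 2 x := by
        refine lintegral_congr fun x => ?_
        simp only [gaussianPDF, ← ENNReal.ofReal_mul (gaussianPDFReal_nonneg 0 1 x),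
          ← ENNReal.ofReal_mul (Real.sqrt_nonneg 2), gaussianPDFReal_mul_exp_sq_div_four]
    _ = ENNReal.ofReal √2 := by
        rw [lintegral_const_mul _ (measurable_gaussianPDF 0 2),
          lintegral_gaussianPDF_eq_one 0 two_ne_zero, mul_one]

lemma lintegral_exp_mul_dot_stdGaussianPi {n : ℕ} (w : Fin n → ℝ) (s : ℝ) :
    ∫⁻ a, ENNReal.ofReal (exp (s * dot a w)) ∂stdGaussianPi n
      = ENNReal.ofReal (exp (s ^ 2 * (∑ i, w i ^ 2) / 2)) := by
  have hprod : ∀ a : Fin n → ℝ, ENNReal.ofReal (exp (s * dot a w))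
      = ∏ i, ENNReal.ofReal (exp ((s * w i) * a i)) := by
    intro a
    rw [← ENNReal.ofReal_prod_of_nonneg fun i _ => (exp_pos _).le, ← exp_sum, dot,
      Finset.mul_sum]
    simp only [mul_comm, mul_left_comm]
  simp_rw [hprod]
  rw [stdGaussianPi, lintegral_pi_prod_eq_prod _
    (g := fun i x => ENNReal.ofReal (exp (s * w i * x))) fun i => by fun_prop]
  simp_rw [lintegral_exp_mul_gaussianReal]
  rw [← ENNReal.ofReal_prod_of_nonneg fun i _ => (exp_pos _).le, ← exp_sum, Finset.mul_sum,
    Finset.sum_div]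
  simp only [zero_mul, zero_add, NNReal.coe_one, one_mul, mul_pow]

lemma lintegral_exp_sq_dot_div_four_le {n : ℕ} (w : Fin n → ℝ) (hw : ∑ i, w i ^ 2 ≤ 1) :
    ∫⁻ a, ENNReal.ofReal (exp (dot a w ^ 2 / 4)) ∂stdGaussianPi n
      ≤ ENNReal.ofReal √2 := by
  -- `exp (y²/4)` is the moment generating function of `N(0,1)` at `y/√2`: this linearizes the
  -- square, so that Fubini reduces to the moment generating function of `dot a w`
  have hmgf : ∀ y : ℝ, ENNReal.ofReal (exp (y ^ 2 / 4))
      = ∫⁻ z, ENNReal.ofReal (exp (y / √2 * z)) ∂gaussianReal 0 1 := by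
    intro y
    rw [lintegral_exp_mul_gaussianReal, div_pow, Real.sq_sqrt zero_le_two]
    congr 2
    push_cast
    ring
  calc ∫⁻ a, ENNReal.ofReal (exp (dot a w ^ 2 / 4)) ∂stdGaussianPi n
      = ∫⁻ z, ∫⁻ a, ENNReal.ofReal (exp (dot a w / √2 * z)) ∂stdGaussianPi n
          ∂gaussianReal 0 1 := by
        simp_rw [hmgf]
        exact lintegral_lintegral_swap (by fun_prop)
    _ ≤ ∫⁻ z, ENNReal.ofReal (exp (z ^ 2 / 4)) ∂gaussianReal 0 1 := by
        refine lintegral_mono fun z => ?_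
        simp_rw [div_mul_comm _ _ z]
        rw [lintegral_exp_mul_dot_stdGaussianPi, div_pow, Real.sq_sqrt zero_le_two]
        refine ENNReal.ofReal_le_ofReal (exp_le_exp.2 ?_)
        nlinarith [mul_le_mul_of_nonneg_left hw (sq_nonneg z)]
    _ = ENNReal.ofReal √2 := lintegral_exp_sq_div_four_gaussianReal

lemma measure_pi_lt_sum_le {ι Ω : Type*} [Fintype ι] [MeasurableSpace Ω] (μ : Measure Ω)
    [IsProbabilityMeasure μ] {f : Ω → ℝ} (hf : Measurable f) (r : ℝ) :
    Measure.pi (fun _ : ι => μ) {ω | r < ∑ j, f (ω j)}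
      ≤ ENNReal.ofReal (exp (-r))
          * (∫⁻ x, ENNReal.ofReal (exp (f x)) ∂μ) ^ Fintype.card ι := by
  have hsum : Measurable fun ω : ι → Ω => ∑ j, f (ω j) := by fun_prop
  have hexp : ∀ ω : ι → Ω, ENNReal.ofReal (exp (∑ j, f (ω j)))
      = ∏ j, ENNReal.ofReal (exp (f (ω j))) := fun ω => by
    rw [exp_sum, ENNReal.ofReal_prod_of_nonneg fun j _ => (exp_pos _).le]
  calc Measure.pi (fun _ => μ) {ω | r < ∑ j, f (ω j)}
      ≤ Measure.pi (fun _ => μ)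
          {ω | ENNReal.ofReal (exp r) ≤ ENNReal.ofReal (exp (∑ j, f (ω j)))} :=
        measure_mono fun ω hω => ENNReal.ofReal_le_ofReal (exp_le_exp.2 (le_of_lt hω))
    _ ≤ (∫⁻ ω, ENNReal.ofReal (exp (∑ j, f (ω j))) ∂Measure.pi fun _ => μ)
          / ENNReal.ofReal (exp r) :=
        meas_ge_le_lintegral_div hsum.exp.ennreal_ofReal.aemeasurable
          (ENNReal.ofReal_pos.2 (exp_pos r)).ne' ENNReal.ofReal_ne_top
    _ = _ := by
        simp_rw [hexp]
        rw [lintegral_pi_prod_eq_prod _ (g := fun _ x => ENNReal.ofReal (exp (f x)))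
          fun _ => by fun_prop, Finset.prod_const, Finset.card_univ, ENNReal.div_eq_inv_mul,
          ← ENNReal.ofReal_inv_of_pos (exp_pos r), ← exp_neg]

lemma rawMeasure_lt_sum_sq_dot_le {m n : ℕ} (w : Fin n → ℝ) (hw : ∑ i, w i ^ 2 ≤ 1)
    (r : ℝ) :
    rawMeasure m n {ω | r < ∑ j, dot (ω j).1 w ^ 2}
      ≤ ENNReal.ofReal (exp (-(r / 4)) * √2 ^ m) := by
  have hdot : Measurable fun p : (Fin n → ℝ) × ℝ => dot p.1 w ^ 2 / 4 := by fun_prop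
  have hrow : ∫⁻ p, ENNReal.ofReal (exp (dot p.1 w ^ 2 / 4))
      ∂(stdGaussianPi n).prod (gaussianReal 0 1) ≤ ENNReal.ofReal √2 := by
    rw [lintegral_prod _ hdot.exp.ennreal_ofReal.aemeasurable]
    simpa using lintegral_exp_sq_dot_div_four_le w hw
  have hevent : {ω : Fin m → (Fin n → ℝ) × ℝ | r < ∑ j, dot (ω j).1 w ^ 2}
      = {ω | r / 4 < ∑ j, dot (ω j).1 w ^ 2 / 4} := by
    ext ω
    rw [Set.mem_ofPred_eq, Set.mem_ofPred_eq, ← Finset.sum_div,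
      div_lt_div_iff_of_pos_right four_pos]
  calc rawMeasure m n {ω | r < ∑ j, dot (ω j).1 w ^ 2}
      ≤ ENNReal.ofReal (exp (-(r / 4)))
          * (∫⁻ p, ENNReal.ofReal (exp (dot p.1 w ^ 2 / 4))
              ∂(stdGaussianPi n).prod (gaussianReal 0 1)) ^ Fintype.card (Fin m) := by
        rw [hevent]
        exact measure_pi_lt_sum_le _ hdot _
    _ ≤ ENNReal.ofReal (exp (-(r / 4))) * ENNReal.ofReal √2 ^ m := by
        rw [Fintype.card_fin]
        gcongr
    _ = ENNReal.ofReal (exp (-(r / 4)) * √2 ^ m) := by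
        rw [ENNReal.ofReal_mul (exp_pos _).le, ENNReal.ofReal_pow (Real.sqrt_nonneg _)]

lemma ofReal_integral_gammaS_le {n : ℕ} (xstar : Fin n → ℝ) {S : Set ℝ}
    (hS : MeasurableSet S) :
    ENNReal.ofReal (∫ a, gammaS S (dot a xstar) ∂stdGaussianPi n)
      ≤ (stdGaussianPi n).prod (gaussianReal 0 1) {p | dot p.1 xstar + p.2 ∈ S} := by
  have hB : MeasurableSet {p : (Fin n → ℝ) × ℝ | dot p.1 xstar + p.2 ∈ S} := by
    exact (by fun_prop : Measurable fun p : (Fin n → ℝ) × ℝ => _) hS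
  calc ENNReal.ofReal (∫ a, gammaS S (dot a xstar) ∂stdGaussianPi n)
      ≤ ‖∫ a, gammaS S (dot a xstar) ∂stdGaussianPi n‖ₑ := Real.ofReal_le_enorm _
    _ ≤ ∫⁻ a, ‖gammaS S (dot a xstar)‖ₑ ∂stdGaussianPi n :=
        enorm_integral_le_lintegral_enorm _
    _ = _ := by
        rw [Measure.prod_apply hB]
        refine lintegral_congr fun a => ?_
        have hshift : gaussianReal (dot a xstar) 1 = (gaussianReal 0 1).map (dot a xstar + ·) := by
          rw [gaussianReal_map_const_add, zero_add]
        rw [gammaS, Real.enorm_of_nonneg ENNReal.toReal_nonneg,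
          ENNReal.ofReal_toReal (measure_ne_top _ _), hshift,
          Measure.map_apply (measurable_const_add _) hS]
        rfl

lemma dataMeasure_le {m n : ℕ} {xstar : Fin n → ℝ} {S : Set ℝ} {α : ℝ}
    (hS : MeasurableSet S) (hCSP : CSP n xstar S α) (E : Set (Fin m → (Fin n → ℝ) × ℝ)) :
    dataMeasure m n xstar S E ≤ (ENNReal.ofReal α ^ m)⁻¹ * rawMeasure m n E := by
  set B := {p : (Fin n → ℝ) × ℝ | dot p.1 xstar + p.2 ∈ S}
  have hB : MeasurableSet B := by
    exact (by fun_prop : Measurable fun p : (Fin n → ℝ) × ℝ => _) hS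
  have hs : {ω : Fin m → (Fin n → ℝ) × ℝ | ∀ j, dot (ω j).1 xstar + (ω j).2 ∈ S}
      = Set.univ.pi fun _ => B := by
    ext ω; simp [B, Set.mem_pi]
  have hraw : ENNReal.ofReal α ^ m ≤ rawMeasure m n (Set.univ.pi fun _ => B) := by
    rw [rawMeasure, Measure.pi_pi, Finset.prod_const, Finset.card_univ, Fintype.card_fin]
    gcongr
    exact (ENNReal.ofReal_le_ofReal hCSP).trans (ofReal_integral_gammaS_le xstar hS)
  rw [dataMeasure, hs, cond_apply (MeasurableSet.univ_pi fun _ => hB)]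
  exact mul_le_mul' (ENNReal.inv_le_inv.2 hraw) (measure_mono Set.inter_subset_right)

def extendByZero {ι : Type*} [DecidableEq ι] (V : Finset ι) (u : V → ℝ) : ι → ℝ :=
  fun i => if h : i ∈ V then u ⟨i, h⟩ else 0

lemma sum_extendByZero {ι : Type*} [Fintype ι] [DecidableEq ι] (V : Finset ι) (u : V → ℝ)
    (f : ι → ℝ → ℝ) (hf : ∀ i, f i 0 = 0) :
    ∑ i, f i (extendByZero V u i) = ∑ i : V, f i (u i) := by
  rw [← Finset.sum_subset (Finset.subset_univ V) fun i _ hi => by simp [extendByZero, hi, hf],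
    ← Finset.sum_coe_sort V]
  simp [extendByZero]

def colSubmatrixCLM {m n : ℕ} (A : Fin m → Fin n → ℝ) (V : Finset (Fin n)) :
    EuclideanSpace ℝ V →L[ℝ] EuclideanSpace ℝ (Fin m) :=
  LinearMap.toContinuousLinearMap (Matrix.toEuclideanLin (Matrix.of fun j (i : V) => A j i))

lemma norm_colSubmatrixCLM_apply {m n : ℕ} (A : Fin m → Fin n → ℝ) (V : Finset (Fin n))
    (u : EuclideanSpace ℝ V) :
    ‖colSubmatrixCLM A V u‖ = √(∑ j, dot (A j) (extendByZero V u) ^ 2) := by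
  simp [colSubmatrixCLM, EuclideanSpace.norm_eq, Matrix.toLpLin_apply, Matrix.mulVec,
    dotProduct, dot, sum_extendByZero]

lemma sqrt_sum_sq_le_opNorm_colSubmatrixCLM {m n : ℕ} (A : Fin m → Fin n → ℝ)
    (V : Finset (Fin n)) {v : Fin n → ℝ} (hv : ∑ i ∈ V, v i ^ 2 ≤ 1) :
    √(∑ j, (∑ i ∈ V, A j i * v i) ^ 2) ≤ ‖colSubmatrixCLM A V‖ := by
  set u : EuclideanSpace ℝ V := WithLp.toLp 2 fun i => v i
  have hu : ‖u‖ ≤ 1 := by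
    rw [EuclideanSpace.norm_eq, Real.sqrt_le_one]
    simpa [u, ← Finset.sum_coe_sort V] using hv
  have hAu : ‖colSubmatrixCLM A V u‖ = √(∑ j, (∑ i ∈ V, A j i * v i) ^ 2) := by
    simp [norm_colSubmatrixCLM_apply, dot, sum_extendByZero, u, ← Finset.sum_coe_sort V]
  simpa [hAu] using (colSubmatrixCLM A V).le_opNorm_of_le hu

lemma rawMeasure_smax_gt_le {m n : ℕ} (V : Finset (Fin n)) {t : ℝ} (ht : 0 ≤ t) :
    rawMeasure m n {ω | ∃ v : Fin n → ℝ, ∑ i ∈ V, v i ^ 2 ≤ 1 ∧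
        t < √(∑ j, (∑ i ∈ V, mat ω j i * v i) ^ 2)}
      ≤ ENNReal.ofReal (5 ^ V.card * √2 ^ m * exp (-(t ^ 2 / 16))) := by
  obtain ⟨N, hNball, hNcard, hN⟩ := exists_finset_isCover_closedBall (E := EuclideanSpace ℝ V)
  rw [finrank_euclideanSpace, Fintype.card_coe] at hNcard
  have hsub : {ω : Fin m → (Fin n → ℝ) × ℝ | ∃ v : Fin n → ℝ,
        ∑ i ∈ V, v i ^ 2 ≤ 1 ∧ t < √(∑ j, (∑ i ∈ V, mat ω j i * v i) ^ 2)}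
      ⊆ ⋃ u ∈ N, {ω | (t / 2) ^ 2 < ∑ j, dot (ω j).1 (extendByZero V u) ^ 2} := by
    rintro ω ⟨v, hv, htv⟩
    refine Set.mem_iUnion₂.2 ?_
    by_contra! hω
    have hL := (colSubmatrixCLM (mat ω) V).opNorm_le_two_mul_of_isCover hN (s := t / 2)
      (by positivity) fun u hu => by
        have hu := hω u hu
        rw [Set.mem_ofPred_eq, not_lt] at hu
        rw [norm_colSubmatrixCLM_apply]
        exact Real.sqrt_le_sqrt hu |>.trans_eq (Real.sqrt_sq (by positivity))
    have := htv.trans_le (sqrt_sum_sq_le_opNorm_colSubmatrixCLM (mat ω) V hv)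
    linarith
  have hball : ∀ u ∈ N, ∑ i, extendByZero V u i ^ 2 ≤ 1 := fun u hu => by
    have := mem_closedBall_zero_iff.1 (hNball hu)
    rw [EuclideanSpace.norm_eq, Real.sqrt_le_one] at this
    have hsum := sum_extendByZero V u (fun _ x => x ^ 2) fun _ => by simp
    simp only at hsum
    simpa [hsum] using this
  calc rawMeasure m n _ ≤ ∑ u ∈ N, rawMeasure m n
        {ω | (t / 2) ^ 2 < ∑ j, dot (ω j).1 (extendByZero V u) ^ 2} :=
        (measure_mono hsub).trans (measure_biUnion_finset_le _ _)
    _ ≤ ∑ u ∈ N, ENNReal.ofReal (exp (-((t / 2) ^ 2 / 4)) * √2 ^ m) :=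
        Finset.sum_le_sum fun u hu => rawMeasure_lt_sum_sq_dot_le _ (hball u hu) _
    _ = ENNReal.ofReal (N.card * (exp (-((t / 2) ^ 2 / 4)) * √2 ^ m)) := by
        rw [Finset.sum_const, nsmul_eq_mul, ENNReal.ofReal_mul (Nat.cast_nonneg _),
          ENNReal.ofReal_natCast]
    _ ≤ ENNReal.ofReal (5 ^ V.card * √2 ^ m * exp (-(t ^ 2 / 16))) := by
        refine ENNReal.ofReal_le_ofReal ?_
        rw [show (t / 2) ^ 2 / 4 = t ^ 2 / 16 by ring, mul_comm (exp _), ← mul_assoc]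
        gcongr
        exact_mod_cast hNcard

lemma five_pow_mul_div_le_exp_neg {α r : ℝ} {k m : ℕ} (hα : 0 < α) (hk : k ≤ m)
    (hr : (log (5 * √2 / α) + 1) * m ≤ r) :
    5 ^ k * √2 ^ m * exp (-r) / α ^ m ≤ exp (-m) := by
  have hq : 0 < 5 * √2 / α := by positivity
  calc 5 ^ k * √2 ^ m * exp (-r) / α ^ m ≤ 5 ^ m * √2 ^ m * exp (-r) / α ^ m := by
        gcongr
        · norm_num
    _ = exp (m * log (5 * √2 / α) - r) := by
        rw [exp_sub, Real.exp_nat_mul, exp_log hq, div_pow, mul_pow, exp_neg]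
        field_simp
    _ ≤ exp (-m) := exp_le_exp.2 (by linarith)

/-- `s_max(A_V) > T√m` iff some `v` with `∑_{i∈V} v_i² ≤ 1` has `‖A_V v‖₂ > T√m`. -/
theorem truncated_gaussian_smax_bound (α : ℝ) (hα : 0 < α) :
    ∃ T c : ℝ, 0 < c ∧
      ∀ (n m : ℕ) (xstar : Fin n → ℝ) (S : Set ℝ),
        MeasurableSet S → CSP n xstar S α →
        ∀ V : Finset (Fin n), V.card ≤ m →
          dataMeasure m n xstar S
            {ω | ∃ v : Fin n → ℝ, (∑ i ∈ V, (v i) ^ 2) ≤ 1 ∧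
              T * Real.sqrt m < Real.sqrt (∑ j, (∑ i ∈ V, mat ω j i * v i) ^ 2)}
            ≤ ENNReal.ofReal (Real.exp (-c * m)) := by
  set T := 4 * √(log (5 * √2 / α) + 1)
  refine ⟨T, 1, one_pos, fun n m xstar S hS hCSP V hVm => ?_⟩
  have hT : (log (5 * √2 / α) + 1) * m ≤ (T * √m) ^ 2 / 16 := by
    rw [mul_pow, mul_pow, Real.sq_sqrt (Nat.cast_nonneg m), Real.sq_sqrt']
    nlinarith [le_max_left (log (5 * √2 / α) + 1) 0, (Nat.cast_nonneg m : (0 : ℝ) ≤ m)]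
  calc dataMeasure m n xstar S _
      ≤ (ENNReal.ofReal α ^ m)⁻¹ * rawMeasure m n _ := dataMeasure_le hS hCSP _
    _ ≤ (ENNReal.ofReal α ^ m)⁻¹
          * ENNReal.ofReal (5 ^ V.card * √2 ^ m * exp (-((T * √m) ^ 2 / 16))) := by
        gcongr
        exact rawMeasure_smax_gt_le V (by positivity)
    _ = ENNReal.ofReal (5 ^ V.card * √2 ^ m * exp (-((T * √m) ^ 2 / 16)) / α ^ m) := by
        rw [← ENNReal.ofReal_pow hα.le, ← ENNReal.ofReal_inv_of_pos (pow_pos hα m),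
          ← ENNReal.ofReal_mul (by positivity), inv_mul_eq_div]
    _ ≤ ENNReal.ofReal (exp (-1 * m)) := by
        rw [neg_one_mul]
        exact ENNReal.ofReal_le_ofReal (five_pow_mul_div_le_exp_neg hα hVm hT)
end
end

section
/- Let ε > 0 and let v ∈ ℝⁿ with ‖v‖₂ = 1. Let a ~ N(0, I_n) and let Z ~ N(0,1) be independent of a. If E_{a~N(0,I_n)}[Pr_Z[aᵀx* + Z ∈ S]] ≥ α, then Pr[ |aᵀv| < α·ε·√(π/2) | aᵀx* + Z ∈ S ] < ε. -/
/-!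
Conditioning on an event of probability at least `α` multiplies probabilities by at most `1/α`,
and by Fubini the truncation event `aᵀx* + Z ∈ S` has probability `E_a[γ_S(aᵀx*)] ≥ α`. So it
suffices that `|aᵀv| < αε√(π/2)` has untruncated probability `< αε`. For a unit vector `v`,
`aᵀv ~ N(0,1)`, whose density is at most `1/√(2π)` and strictly smaller away from `0`; the
interval `(-αε√(π/2), αε√(π/2))` therefore has mass strictly below its length over `√(2π)`,
which is `αε`.
-/

open MeasureTheory ProbabilityTheory Real Filter Topology

noncomputable section

lemma gaussianPDFReal_lt_of_ne (m : ℝ) {v : NNReal} (hv : v ≠ 0) {x : ℝ} (hx : x ≠ m) :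
    gaussianPDFReal m v x < (√(2 * π * v))⁻¹ := by
  have hexp : rexp (-(x - m) ^ 2 / (2 * v)) < 1 := by
    have hsq : 0 < (x - m) ^ 2 := sq_pos_of_ne_zero (sub_ne_zero.mpr hx)
    have hv' : (0 : ℝ) < v := by positivity
    rw [Real.exp_lt_one_iff, neg_div]
    exact neg_neg_of_pos (by positivity)
  rw [gaussianPDFReal_def]
  exact mul_lt_of_lt_one_right (by positivity) hexp

lemma gaussianPDFReal_le (m : ℝ) (v : NNReal) (x : ℝ) :
    gaussianPDFReal m v x ≤ (√(2 * π * v))⁻¹ := by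
  rw [gaussianPDFReal_def]
  refine mul_le_of_le_one_right (by positivity) (Real.exp_le_one_iff.mpr ?_)
  rw [neg_div]
  exact neg_nonpos.mpr (by positivity)

lemma gaussianReal_Ioo_lt (m : ℝ) {v : NNReal} (hv : v ≠ 0) {a b : ℝ} (hab : a < b) :
    gaussianReal m v (Set.Ioo a b) < ENNReal.ofReal ((b - a) * (√(2 * π * v))⁻¹) := by
  rw [gaussianReal_apply_eq_integral m hv, ← integral_Ioc_eq_integral_Ioo,
    ← intervalIntegral.integral_of_le hab.le, ENNReal.ofReal_lt_ofReal_iff (by positivity)]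
  have hm : ∃ c ∈ Set.Icc a b, c ≠ m := by
    by_cases ha : a = m
    · exact ⟨b, Set.right_mem_Icc.mpr hab.le, ha ▸ hab.ne'⟩
    · exact ⟨a, Set.left_mem_Icc.mpr hab.le, ha⟩
  obtain ⟨c, hc, hcm⟩ := hm
  calc ∫ x in a..b, gaussianPDFReal m v x
      < ∫ _ in a..b, (√(2 * π * v))⁻¹ :=
        intervalIntegral.integral_lt_integral_of_continuousOn_of_le_of_exists_lt hab
          (by unfold gaussianPDFReal; fun_prop) continuousOn_const
          (fun x _ => gaussianPDFReal_le m v x) ⟨c, hc, gaussianPDFReal_lt_of_ne m hv hcm⟩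
    _ = (b - a) * (√(2 * π * v))⁻¹ := by rw [intervalIntegral.integral_const, smul_eq_mul]

lemma measurable_dot {n : ℕ} (v : Fin n → ℝ) : Measurable fun a : Fin n → ℝ => dot a v := by
  unfold dot
  fun_prop

lemma dot_eq_inner {n : ℕ} (a v : Fin n → ℝ) :
    dot a v = innerSL ℝ (WithLp.toLp 2 v) (WithLp.toLp 2 a) := by
  simp [dot, PiLp.inner_apply]

lemma norm2_eq_norm {n : ℕ} (v : Fin n → ℝ) : norm2 v = ‖WithLp.toLp 2 v‖ := by
  simp [norm2, EuclideanSpace.norm_eq]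

lemma stdGaussianPi_map_dot {n : ℕ} (v : Fin n → ℝ) :
    (stdGaussianPi n).map (fun a => dot a v) = gaussianReal 0 (norm2 v ^ 2).toNNReal := by
  have hL : (fun a => dot a v) = innerSL ℝ (WithLp.toLp 2 v) ∘ WithLp.toLp 2 := by
    ext a; exact dot_eq_inner a v
  rw [hL, ← Measure.map_map (by fun_prop) (by fun_prop), stdGaussianPi, map_pi_eq_stdGaussian,
    IsGaussian.map_eq_gaussianReal, integral_strongDual_stdGaussian, variance_dual_stdGaussian,
    innerSL_apply_norm, norm2_eq_norm]

lemma prod_gaussianReal_setOf_add_mem {X : Type*} [MeasurableSpace X] (ν : Measure X)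
    [SFinite ν] {f : X → ℝ} (hf : Measurable f) {S : Set ℝ} (hS : MeasurableSet S) (w : NNReal) :
    (ν.prod (gaussianReal 0 w)) {p | f p.1 + p.2 ∈ S} = ∫⁻ a, gaussianReal (f a) w S ∂ν := by
  rw [Measure.prod_apply (show MeasurableSet {p : X × ℝ | f p.1 + p.2 ∈ S} from
    (hf.comp measurable_fst).add measurable_snd hS)]
  refine lintegral_congr fun a => ?_
  change gaussianReal 0 w ((f a + ·) ⁻¹' S) = _
  rw [← Measure.map_apply (measurable_const_add _) hS, gaussianReal_map_const_add, zero_add]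

instance isProbabilityMeasure_stdGaussianPi (n : ℕ) : IsProbabilityMeasure (stdGaussianPi n) := by
  unfold stdGaussianPi; infer_instance

lemma ofReal_le_prod_setOf_add_mem_of_CSP {n : ℕ} {xstar : Fin n → ℝ} {S : Set ℝ}
    (hS : MeasurableSet S) {α : ℝ} (hCSP : CSP n xstar S α) :
    ENNReal.ofReal α ≤
      ((stdGaussianPi n).prod (gaussianReal 0 1)) {p | dot p.1 xstar + p.2 ∈ S} := by
  have hmeas : Measurable fun a => gaussianReal (dot a xstar) 1 S :=
    (Measure.measurable_coe hS).comp
      (measurable_gaussianReal.comp ((measurable_dot xstar).prodMk measurable_const))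
  rw [prod_gaussianReal_setOf_add_mem _ (measurable_dot xstar) hS]
  refine ENNReal.ofReal_le_of_le_toReal (hCSP.trans_eq ?_)
  rw [← integral_toReal hmeas.aemeasurable (ae_of_all _ fun _ => measure_lt_top _ _)]
  rfl

lemma stdGaussianPi_abs_dot_lt {n : ℕ} {v : Fin n → ℝ} (hv : norm2 v = 1) {c : ℝ} (hc : 0 < c) :
    stdGaussianPi n {a | |dot a v| < c * √(π / 2)} < ENNReal.ofReal c := by
  have hr : 0 < c * √(π / 2) := by positivity
  have hwidth : (c * √(π / 2) - -(c * √(π / 2))) * (√(2 * π * (1 : NNReal)))⁻¹ = c := by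
    rw [NNReal.coe_one, mul_one, show 2 * π = 2 ^ 2 * (π / 2) by ring,
      Real.sqrt_mul (by positivity), Real.sqrt_sq zero_le_two]
    field_simp
    ring
  have hset : {a | |dot a v| < c * √(π / 2)}
      = (fun a => dot a v) ⁻¹' Set.Ioo (-(c * √(π / 2))) (c * √(π / 2)) := by
    ext a; simp [abs_lt]
  rw [hset, ← Measure.map_apply (measurable_dot v) measurableSet_Ioo, stdGaussianPi_map_dot, hv,
    one_pow, Real.toNNReal_one]
  exact (gaussianReal_Ioo_lt 0 one_ne_zero (neg_lt_self hr)).trans_eq (by rw [hwidth])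

lemma cond_apply_lt_of_le_of_lt {Ω : Type*} [MeasurableSpace Ω] {μ : Measure Ω} {E : Set Ω}
    (hE : MeasurableSet E) (B : Set Ω) {α ε : ℝ} (hα : 0 < α)
    (hμE : ENNReal.ofReal α ≤ μ E) (hμB : μ B < ENNReal.ofReal (α * ε)) :
    μ[B | E] < ENNReal.ofReal ε := by
  have hα' : ENNReal.ofReal α ≠ 0 := by simpa using hα
  rw [cond_apply hE]
  calc (μ E)⁻¹ * μ (E ∩ B)
      ≤ (ENNReal.ofReal α)⁻¹ * μ B :=
        mul_le_mul' (ENNReal.inv_le_inv.mpr hμE) (measure_mono Set.inter_subset_right)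
    _ < (ENNReal.ofReal α)⁻¹ * ENNReal.ofReal (α * ε) :=
        ENNReal.mul_lt_mul_right (ENNReal.inv_ne_zero.mpr ENNReal.ofReal_ne_top)
          (ENNReal.inv_ne_top.mpr hα') hμB
    _ = ENNReal.ofReal ε := by
        rw [ENNReal.ofReal_mul hα.le, ← mul_assoc,
          ENNReal.inv_mul_cancel hα' ENNReal.ofReal_ne_top, one_mul]

/-- anti-concentration of `aᵀv` under truncation (Lemma `dplower`). -/
theorem truncated_dot_product_lower (n : ℕ) (xstar v : Fin n → ℝ) (S : Set ℝ)
    (hS : MeasurableSet S) (α ε : ℝ) (hα : 0 < α) (hε : 0 < ε)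
    (hv : norm2 v = 1) (hCSP : CSP n xstar S α) :
    (((stdGaussianPi n).prod (gaussianReal 0 1))[|{p | dot p.1 xstar + p.2 ∈ S}])
        {p | |dot p.1 v| < α * ε * Real.sqrt (Real.pi / 2)}
      < ENNReal.ofReal ε := by
  have hE : MeasurableSet {p : (Fin n → ℝ) × ℝ | dot p.1 xstar + p.2 ∈ S} :=
    ((measurable_dot xstar).comp measurable_fst).add measurable_snd hS
  have hmarginal :
      ((stdGaussianPi n).prod (gaussianReal 0 1)) {p | |dot p.1 v| < α * ε * √(π / 2)} =
        stdGaussianPi n {a | |dot a v| < α * ε * √(π / 2)} :=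
    measurePreserving_fst.measure_preimage
      (measurableSet_lt (measurable_dot v).abs measurable_const).nullMeasurableSet
  exact cond_apply_lt_of_le_of_lt hE _ hα (ofReal_le_prod_setOf_add_mem_of_CSP hS hCSP)
    (hmarginal.trans_lt (stdGaussianPi_abs_dot_lt hv (mul_pos hα hε)))
end
end

section
/- For every A ∈ ℝ^{m×n} and y ∈ ℝ^m, the truncated negative log-likelihood nll(x; A, y) is twice differentiable in x, with gradient ∇nll(x; A, y) = (1/m)·Σ_{j=1}^m A_jᵀ·(E[Z_{A_j,x}] − y_j) and Hessian H(x; A, y) = (1/m)·Σ_{j=1}^m A_jᵀ A_j · Var(Z_{A_j,x}). -/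
open MeasureTheory ProbabilityTheory Real Filter Topology

noncomputable section

/-- The claimed gradient `∇nll(x;A,y) = (1/m) Σ_j A_jᵀ (E[Z_{A_j,x}] − y_j)`. -/
def gradNll (S : Set ℝ) {m n : ℕ} (A : Fin m → Fin n → ℝ) (y : Fin m → ℝ)
    (x : Fin n → ℝ) : Fin n → ℝ :=
  fun i => (1 / (m : ℝ)) * ∑ j, A j i * (truncMean S (dot (A j) x) - y j)

/-- The claimed Hessian `H(x;A,y) = (1/m) Σ_j A_jᵀ A_j Var(Z_{A_j,x})`. -/
def hessNll (S : Set ℝ) {m n : ℕ} (A : Fin m → Fin n → ℝ) (x : Fin n → ℝ) :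
    Matrix (Fin n) (Fin n) ℝ :=
  Matrix.of fun i i' => (1 / (m : ℝ)) * ∑ j, A j i * A j i' * truncVar S (dot (A j) x)

/-! The truncated normal `N(t, 1; S)` is the exponential tilt `ν.tilted (t * ·)` of the
restricted standard Gaussian `ν = N(0, 1)|_S`, and up to a quadratic polynomial in `t` the
log-partition function `log ∫_S e^{-(t - z)²/2} dz` is the cumulant generating function of `ν`.
The derivatives of a cumulant generating function are the mean and the variance of the tilted
measure, so each summand of `nll` has derivative `E[Z_t] - y_j` and `t ↦ E[Z_t]` has derivative
`Var(Z_t)`; the chain rule through `x ↦ A_j x` gives the gradient and the Hessian. -/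

open scoped ENNReal NNReal

lemma gaussianPDFReal_mul_exp_mul {μ : ℝ} {v : ℝ≥0} (hv : v ≠ 0) (t x : ℝ) :
    gaussianPDFReal μ v x * exp (t * x) =
      exp (μ * t + v * t ^ 2 / 2) * gaussianPDFReal (μ + v * t) v x := by
  have hv' : (v : ℝ) ≠ 0 := NNReal.coe_ne_zero.mpr hv
  rw [gaussianPDFReal, gaussianPDFReal, mul_assoc, ← exp_add, mul_left_comm, ← exp_add]
  congr 2
  field_simp
  ring

lemma tilted_mul_gaussianReal {μ : ℝ} {v : ℝ≥0} (hv : v ≠ 0) (t : ℝ) :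
    (gaussianReal μ v).tilted (t * ·) = gaussianReal (μ + v * t) v := by
  have hZ : ∫ x, exp (t * x) ∂gaussianReal μ v = exp (μ * t + v * t ^ 2 / 2) :=
    congrFun mgf_id_gaussianReal t
  rw [Measure.tilted, hZ, gaussianReal_of_var_ne_zero _ hv, gaussianReal_of_var_ne_zero _ hv,
    ← withDensity_mul _ (measurable_gaussianPDF _ _) (by fun_prop)]
  refine withDensity_congr_ae (ae_of_all _ fun x => ?_)
  rw [Pi.mul_apply, gaussianPDF, gaussianPDF, ← ENNReal.ofReal_mul (gaussianPDFReal_nonneg ..),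
    mul_div_assoc', gaussianPDFReal_mul_exp_mul hv, mul_div_cancel_left₀ _ (exp_ne_zero _)]

lemma mem_interior_integrableExpSet_id_restrict_gaussianReal (μ : ℝ) (v : ℝ≥0) (S : Set ℝ)
    (t : ℝ) : t ∈ interior (integrableExpSet id ((gaussianReal μ v).restrict S)) := by
  have h : integrableExpSet id ((gaussianReal μ v).restrict S) = Set.univ :=
    Set.eq_univ_of_forall fun t => (integrable_exp_mul_gaussianReal t).restrict
  simp [h]

lemma cond_tilted {α : Type*} [MeasurableSpace α] {μ : Measure α} [SFinite μ] {f : α → ℝ}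
    (hf : Integrable (fun x => exp (f x)) μ) (s : Set α) :
    (μ.tilted f)[|s] = (μ.restrict s).tilted f := by
  by_cases hs : μ s = 0
  · rw [Measure.restrict_eq_zero.mpr hs, tilted_zero_measure,
      cond_eq_zero_of_meas_eq_zero (tilted_absolutelyContinuous μ f hs)]
  have : NeZero (μ.restrict s) := ⟨by simpa using hs⟩
  have : NeZero μ := ⟨fun h => hs (by simp [h])⟩
  have hZ : 0 < ∫ x, exp (f x) ∂μ := integral_exp_pos hf
  have hZs : 0 < ∫ x in s, exp (f x) ∂μ := integral_exp_pos hf.restrict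
  ext A hA
  rw [cond_apply' hA, tilted_apply_eq_ofReal_integral _ s,
    tilted_apply_eq_ofReal_integral _ (s ∩ A), tilted_apply_eq_ofReal_integral' _ hA,
    Measure.restrict_restrict hA, Set.inter_comm A s, integral_div, integral_div, integral_div,
    ← ENNReal.ofReal_inv_of_pos (by positivity), ← ENNReal.ofReal_mul (by positivity)]
  congr 1
  field_simp

lemma truncNormal_eq_tilted (S : Set ℝ) (t : ℝ) :
    truncNormal S t = ((gaussianReal 0 1).restrict S).tilted (t * ·) := by
  rw [truncNormal, ← cond_tilted (integrable_exp_mul_gaussianReal t) S,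
    tilted_mul_gaussianReal one_ne_zero, NNReal.coe_one, one_mul, zero_add]

lemma truncMean_eq_deriv_cgf (S : Set ℝ) (t : ℝ) :
    truncMean S t = deriv (cgf id ((gaussianReal 0 1).restrict S)) t := by
  rw [truncMean, truncNormal_eq_tilted]
  exact integral_tilted_mul_self (mem_interior_integrableExpSet_id_restrict_gaussianReal ..)

lemma truncVar_eq_iteratedDeriv_two_cgf (S : Set ℝ) (t : ℝ) :
    truncVar S t = iteratedDeriv 2 (cgf id ((gaussianReal 0 1).restrict S)) t := by
  rw [truncVar, truncNormal_eq_tilted]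
  exact variance_tilted_mul (mem_interior_integrableExpSet_id_restrict_gaussianReal ..)

lemma hasDerivAt_truncMean (S : Set ℝ) (t : ℝ) :
    HasDerivAt (truncMean S) (truncVar S t) t := by
  rw [funext (truncMean_eq_deriv_cgf S), truncVar_eq_iteratedDeriv_two_cgf, iteratedDeriv_succ,
    iteratedDeriv_one]
  exact (analyticAt_cgf (mem_interior_integrableExpSet_id_restrict_gaussianReal ..)).deriv
    |>.differentiableAt.hasDerivAt

lemma mgf_id_restrict_gaussianReal (S : Set ℝ) (t : ℝ) :
    mgf id ((gaussianReal 0 1).restrict S) t =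
      (√(2 * π))⁻¹ * exp (t ^ 2 / 2) * ∫ z in S, exp (-(t - z) ^ 2 / 2) := by
  rw [mgf, gaussianReal_of_var_ne_zero _ one_ne_zero,
    setIntegral_withDensity_eq_setIntegral_toReal_smul' S (measurable_gaussianPDF _ _)
      (ae_of_all _ fun _ => gaussianPDF_lt_top), ← integral_const_mul]
  refine integral_congr_ae (ae_of_all _ fun z => ?_)
  dsimp only
  rw [toReal_gaussianPDF, smul_eq_mul, id, gaussianPDFReal_mul_exp_mul one_ne_zero,
    gaussianPDFReal]
  simp only [NNReal.coe_one, mul_one, zero_mul, zero_add, one_mul]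
  rw [sub_sq_comm]
  ring

lemma hasDerivAt_sq_sub_add_log_setIntegral {S : Set ℝ}
    (hpos : ∀ t : ℝ, 0 < ∫ z in S, exp (-(t - z) ^ 2 / 2)) (y t : ℝ) :
    HasDerivAt (fun t => (t - y) ^ 2 / 2 + log (∫ z in S, exp (-(t - z) ^ 2 / 2)))
      (truncMean S t - y) t := by
  set ν := (gaussianReal 0 1).restrict S
  have hcgf : ∀ t, cgf id ν t =
      -log √(2 * π) + t ^ 2 / 2 + log (∫ z in S, exp (-(t - z) ^ 2 / 2)) := by
    intro t
    rw [cgf, mgf_id_restrict_gaussianReal, log_mul (by positivity) (hpos t).ne',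
      log_mul (by positivity) (exp_ne_zero _), log_inv, log_exp]
  have hfun : (fun t => (t - y) ^ 2 / 2 + log (∫ z in S, exp (-(t - z) ^ 2 / 2))) =
      fun t => y ^ 2 / 2 + log √(2 * π) - y * t + cgf id ν t := by
    funext t
    rw [hcgf]
    ring
  have hderiv : HasDerivAt (cgf id ν) (deriv (cgf id ν) t) t :=
    (analyticAt_cgf (mem_interior_integrableExpSet_id_restrict_gaussianReal ..))
      |>.differentiableAt.hasDerivAt
  rw [hfun, truncMean_eq_deriv_cgf]
  refine ((((hasDerivAt_id' t).const_mul y).const_sub _).add hderiv).congr_deriv ?_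
  ring

def dotCLM {n : ℕ} (a : Fin n → ℝ) : (Fin n → ℝ) →L[ℝ] ℝ :=
  ∑ i, a i • ContinuousLinearMap.proj i

lemma dotCLM_apply {n : ℕ} (a v : Fin n → ℝ) : dotCLM a v = dot a v := by
  simp [dotCLM, dot]

lemma hasFDerivAt_dot {n : ℕ} (a x : Fin n → ℝ) : HasFDerivAt (dot a) (dotCLM a) x :=
  HasFDerivAt.fun_sum fun i _ => (hasFDerivAt_apply i x).const_mul (a i)

lemma hasFDerivAt_mean_comp_dot {m n : ℕ} (A : Fin m → Fin n → ℝ)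
    (g g' : Fin m → ℝ → ℝ) (x : Fin n → ℝ)
    (hg : ∀ j, HasDerivAt (g j) (g' j (dot (A j) x)) (dot (A j) x)) :
    HasFDerivAt (fun x => (1 / (m : ℝ)) * ∑ j, g j (dot (A j) x))
      (dotCLM fun i => (1 / (m : ℝ)) * ∑ j, A j i * g' j (dot (A j) x)) x := by
  have h := (HasFDerivAt.fun_sum (u := Finset.univ) fun j _ =>
    (hg j).comp_hasFDerivAt x (hasFDerivAt_dot (A j) x)).const_mul (1 / (m : ℝ))
  refine h.congr_fderiv ?_
  ext v
  simp only [dotCLM_apply, smul_apply, sum_apply, smul_eq_mul, dot, Finset.mul_sum,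
    Finset.sum_mul]
  rw [Finset.sum_comm]
  exact Finset.sum_congr rfl fun j _ => Finset.sum_congr rfl fun i _ => by ring

theorem nll_gradient_hessian_general {m n : ℕ} (S : Set ℝ)
    (hpos : ∀ t : ℝ, 0 < ∫ z in S, Real.exp (-(t - z) ^ 2 / 2))
    (A : Fin m → Fin n → ℝ) (y : Fin m → ℝ) (x : Fin n → ℝ) :
    HasFDerivAt (nll S A y)
      (∑ i, gradNll S A y x i •
        (ContinuousLinearMap.proj i : (Fin n → ℝ) →L[ℝ] ℝ)) x ∧
    HasFDerivAt (fun x' => gradNll S A y x')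
      (LinearMap.toContinuousLinearMap (Matrix.mulVecLin (hessNll S A x))) x := by
  refine ⟨hasFDerivAt_mean_comp_dot A
    (fun j t => (t - y j) ^ 2 / 2 + log (∫ z in S, exp (-(t - z) ^ 2 / 2)))
    (fun j t => truncMean S t - y j) x fun j =>
      hasDerivAt_sq_sub_add_log_setIntegral hpos (y j) _, hasFDerivAt_pi'' fun i => ?_⟩
  have h := hasFDerivAt_mean_comp_dot A (fun j t => A j i * (truncMean S t - y j))
    (fun j t => A j i * truncVar S t) x fun j =>
      ((hasDerivAt_truncMean S _).sub_const (y j)).const_mul (A j i)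
  refine h.congr_fderiv ?_
  ext v
  simp only [ContinuousLinearMap.comp_apply, LinearMap.coe_toContinuousLinearMap',
    Matrix.mulVecLin_apply, ContinuousLinearMap.proj_apply, Matrix.mulVec, dotProduct, hessNll,
    Matrix.of_apply, dotCLM_apply, dot, Finset.mul_sum, Finset.sum_mul]
  exact Finset.sum_congr rfl fun i' _ => Finset.sum_congr rfl fun j _ => by ring

/-- gradient and Hessian of the truncated negative log-likelihood
(Lemma `gradient`).  The first conjunct states differentiability with the claimed
gradient; the second states differentiability of the gradient map with the claimed
Hessian as its derivative (hence `nll` is twice differentiable). -/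
theorem nll_gradient_hessian {m n : ℕ} (S : Set ℝ) (hS : MeasurableSet S)
    (hpos : ∀ t : ℝ, 0 < ∫ z in S, Real.exp (-(t - z) ^ 2 / 2))
    (A : Fin m → Fin n → ℝ) (y : Fin m → ℝ) (x : Fin n → ℝ) :
    HasFDerivAt (nll S A y)
      (∑ i, gradNll S A y x i •
        (ContinuousLinearMap.proj i : (Fin n → ℝ) →L[ℝ] ℝ)) x ∧
    HasFDerivAt (fun x' => gradNll S A y x')
      (LinearMap.toContinuousLinearMap (Matrix.mulVecLin (hessNll S A x))) x :=
  nll_gradient_hessian_general S hpos A y x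
end
end
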